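/- Let T be a terrain and let g ∈ T ∖ U be a point that covers an entire edge e_i of T, i.e., e_i ⊆ V(g). Then the U-neighbors u_ℓ := max{u ∈ U : x(u) < x(g)} and u_r := min{u ∈ U : x(u) > x(g)} of g exist, and each of them entirely covers e_i, i.e., e_i ⊆ V(u_ℓ) and e_i ⊆ V(u_r). -/

import Mathlib

/-!
Since `g` sees both endpoints of `e_i`, it lies in `V(v_i)` and in `V(v_{i+1})`, and since
`g ∉ U` it is extremal in neither: its connected components there reach strictly beyond `g` on
both sides, and their outermost points are extremal, hence in `U`. So `U` has points on both
sides of `g`, and as `U` is closed (the extremal points of a closed visibility region form a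
closed set) the `U`-neighbours exist. A connected part of a terrain contains every terrain point
whose `x`-coordinate lies between two of its points, so each `U`-neighbour lies in both
components, i.e. sees `v_i` and `v_{i+1}`; and a point of `T` seeing both endpoints of an edge
sees the whole edge, because every point of the triangle it spans lies above a point of a side
with the same `x`-coordinate.
-/

open Set

/-- A terrain: `n ≥ 2` vertices `v 0, …, v (n-1)` in `ℝ²` with strictly
increasing `x`-coordinates. -/
structure Terrain where
  n : ℕ
  hn : 2 ≤ n
  v : ℕ → ℝ × ℝ
  mono : ∀ i j : ℕ, i < j → j < n → (v i).1 < (v j).1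

namespace Terrain

/-- The edge `e_i = [v_i, v_{i+1}]` (meaningful for `i + 1 < n`). -/
def edge (T : Terrain) (i : ℕ) : Set (ℝ × ℝ) := segment ℝ (T.v i) (T.v (i + 1))

/-- The terrain as a subset of `ℝ²`: the union of its edges. -/
def carrier (T : Terrain) : Set (ℝ × ℝ) := ⋃ i ∈ Finset.range (T.n - 1), T.edge i

/-- The interior of the edge `e_i`: the edge minus its two endpoints. -/
def intEdge (T : Terrain) (i : ℕ) : Set (ℝ × ℝ) := T.edge i \ {T.v i, T.v (i + 1)}

/-- `p` sees `q` iff every point of the segment `[p, q]` is nowhere strictly below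
the terrain, i.e. every point of the segment lies on or above the terrain point
with the same `x`-coordinate. -/
def sees (T : Terrain) (p q : ℝ × ℝ) : Prop :=
  ∀ z ∈ segment ℝ p q, ∀ t ∈ T.carrier, t.1 = z.1 → t.2 ≤ z.2

/-- The visibility region `V(p) = {q ∈ T : p sees q}`. -/
def vis (T : Terrain) (p : ℝ × ℝ) : Set (ℝ × ℝ) := {q ∈ T.carrier | T.sees p q}

/-- `V(C) = ⋃_{g ∈ C} V(g)`. -/
def visSet (T : Terrain) (C : Set (ℝ × ℝ)) : Set (ℝ × ℝ) := ⋃ g ∈ C, T.vis g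

/-- `C ⊆ T` is a cover of the terrain iff `V(C) = T`. -/
def IsCover (T : Terrain) (C : Set (ℝ × ℝ)) : Prop :=
  C ⊆ T.carrier ∧ T.visSet C = T.carrier

/-- The vertex set `V = {v_1, …, v_n}`. -/
def vertexSet (T : Terrain) : Set (ℝ × ℝ) := {p | ∃ i < T.n, p = T.v i}

/-- Edge `e_i` is critical w.r.t. `g ∈ C`: `C \ {g}` covers some part of,
but not all of, `int(e_i)`. -/
def IsCriticalWrt (T : Terrain) (C : Set (ℝ × ℝ)) (g : ℝ × ℝ) (i : ℕ) : Prop :=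
  (T.visSet (C \ {g}) ∩ T.intEdge i).Nonempty ∧ ¬ T.intEdge i ⊆ T.visSet (C \ {g})

/-- `g` is a left-guard of `e_i`: `x(g) < x(v_i)` and `e_i` is critical w.r.t. `g`. -/
def IsLeftGuard (T : Terrain) (C : Set (ℝ × ℝ)) (g : ℝ × ℝ) (i : ℕ) : Prop :=
  g.1 < (T.v i).1 ∧ T.IsCriticalWrt C g i

/-- `g` is a right-guard of `e_i`: `x(v_{i+1}) < x(g)` and `e_i` is critical w.r.t. `g`. -/
def IsRightGuard (T : Terrain) (C : Set (ℝ × ℝ)) (g : ℝ × ℝ) (i : ℕ) : Prop :=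
  (T.v (i + 1)).1 < g.1 ∧ T.IsCriticalWrt C g i

/-- `q` is extremal in `V(p)`: `q ∈ V(p)` and `q` has maximal or minimal
`x`-coordinate within its connected component of `V(p)`. -/
def Extremal (T : Terrain) (p q : ℝ × ℝ) : Prop :=
  q ∈ T.vis p ∧
    ((∀ r ∈ connectedComponentIn (T.vis p) q, r.1 ≤ q.1) ∨
     (∀ r ∈ connectedComponentIn (T.vis p) q, q.1 ≤ r.1))

/-- The guard candidate set `U`: all vertices together with the extremal points
of the vertices' visibility regions. -/
def Uset (T : Terrain) : Set (ℝ × ℝ) :=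
  T.vertexSet ∪ ⋃ i ∈ Finset.range T.n, {q | T.Extremal (T.v i) q}

/-- `OPT(G, W)`: the minimum cardinality of a finite `C ⊆ G` with `W ⊆ V(C)`. -/
noncomputable def OPT (T : Terrain) (G W : Set (ℝ × ℝ)) : ℕ :=
  sInf {k | ∃ C : Finset (ℝ × ℝ), ↑C ⊆ G ∧ W ⊆ T.visSet ↑C ∧ C.card = k}

end Terrain


open scoped Pointwise

lemma injOn_fst_segment {a b : ℝ × ℝ} (hab : a.1 ≠ b.1) : InjOn Prod.fst (segment ℝ a b) := by
  rw [segment_eq_image]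
  rintro _ ⟨s, -, rfl⟩ _ ⟨s', -, rfl⟩ h
  have h' : (s - s') * (b.1 - a.1) = 0 := by
    simp only [Prod.fst_add, Prod.smul_fst, smul_eq_mul] at h
    linarith
  have : s = s' := by
    simpa [sub_eq_zero, hab.symm] using h'
  rw [this]

lemma isClosed_setOf_segment_subset {E : Type*} [AddCommGroup E] [Module ℝ E]
    [TopologicalSpace E] [IsTopologicalAddGroup E] [ContinuousSMul ℝ E]
    {A : Set E} (hA : IsClosed A) (p : E) : IsClosed {q | segment ℝ p q ⊆ A} := by
  have : {q | segment ℝ p q ⊆ A} = ⋂ θ ∈ Icc (0 : ℝ) 1, (fun q => (1 - θ) • p + θ • q) ⁻¹' A := by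
    ext q
    simp only [segment_eq_image, image_subset_iff, mem_ofPred_eq, mem_iInter]
    rfl
  rw [this]
  exact isClosed_biInter fun θ _ => hA.preimage (by fun_prop)

lemma isCompact_segment {E : Type*} [AddCommGroup E] [Module ℝ E]
    [TopologicalSpace E] [IsTopologicalAddGroup E] [ContinuousSMul ℝ E] (a b : E) :
    IsCompact (segment ℝ a b) :=
  segment_eq_image ℝ a b ▸ isCompact_Icc.image (by fun_prop)

lemma IsCompact.connectedComponentIn {X : Type*} [TopologicalSpace X] {F : Set X}
    (hF : IsCompact F) (x : X) : IsCompact (connectedComponentIn F x) := by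
  by_cases hx : x ∈ F
  · have := isCompact_iff_compactSpace.mp hF
    rw [connectedComponentIn_eq_image hx]
    exact isClosed_connectedComponent.isCompact.image continuous_subtype_val
  · rw [connectedComponentIn_eq_empty hx]
    exact isCompact_empty

lemma exists_nonneg_add_mul_eq_zero {ι : Type*} [Fintype ι] {c e : ι → ℝ}
    (hc : ∀ k, 0 ≤ c k) (he : ∃ k, e k < 0) :
    ∃ t : ℝ, 0 ≤ t ∧ (∀ k, 0 ≤ c k + t * e k) ∧ ∃ k, c k + t * e k = 0 := by
  classical
  obtain ⟨j, hj, hmin⟩ := Finset.exists_min_image (Finset.univ.filter fun k => e k < 0)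
    (fun k => c k / -e k) (let ⟨k, hk⟩ := he; ⟨k, by simpa using hk⟩)
  replace hj : e j < 0 := by simpa using hj
  refine ⟨c j / -e j, div_nonneg (hc j) (by linarith), fun k => ?_, j, ?_⟩
  · rcases lt_or_ge (e k) 0 with hk | hk
    · have := (le_div_iff₀ (by linarith)).1 (hmin k (by simpa using hk))
      linarith
    · have := div_nonneg (hc j) (by linarith : 0 ≤ -e j)
      nlinarith [hc k]
  · have := hj.ne
    field_simp
    ring

/-- The lowest point of a vertical slice of the triangle `u a b` lies on one of its sides. -/
lemma exists_mem_side_fst_eq_snd_le {u a b : ℝ × ℝ} (hab : a.1 ≠ b.1) {c₀ c₁ c₂ : ℝ}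
    (h₀ : 0 ≤ c₀) (h₁ : 0 ≤ c₁) (h₂ : 0 ≤ c₂) (hsum : c₀ + c₁ + c₂ = 1) :
    ∃ w : ℝ × ℝ, w.1 = (c₀ • u + c₁ • a + c₂ • b).1 ∧ w.2 ≤ (c₀ • u + c₁ • a + c₂ • b).2 ∧
      (w ∈ segment ℝ a b ∨ w ∈ segment ℝ u b ∨ w ∈ segment ℝ u a) := by
  -- moving the weights along `e` keeps the `x`-coordinate and does not raise the point
  obtain ⟨e₀, e₁, e₂, he₀, hesum, hex, hey⟩ : ∃ e₀ e₁ e₂ : ℝ, e₀ ≠ 0 ∧ e₀ + e₁ + e₂ = 0 ∧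
      e₀ * u.1 + e₁ * a.1 + e₂ * b.1 = 0 ∧ e₀ * u.2 + e₁ * a.2 + e₂ * b.2 ≤ 0 := by
    rcases le_or_gt ((a.1 - b.1) * u.2 + (b.1 - u.1) * a.2 + (u.1 - a.1) * b.2) 0 with h | h
    · exact ⟨a.1 - b.1, b.1 - u.1, u.1 - a.1, sub_ne_zero.2 hab, by ring, by ring, h⟩
    · exact ⟨b.1 - a.1, u.1 - b.1, a.1 - u.1, sub_ne_zero.2 hab.symm, by ring, by ring,
        by linarith⟩
  have hneg : ∃ k, ![e₀, e₁, e₂] k < 0 := by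
    by_contra! h
    have := h 0; have := h 1; have := h 2
    simp only [Fin.isValue, Matrix.cons_val] at *
    exact he₀ (by linarith)
  obtain ⟨t, ht, hpos, k, hk⟩ := exists_nonneg_add_mul_eq_zero
    (c := ![c₀, c₁, c₂]) (fun k => by fin_cases k <;> assumption) hneg
  have hpos₀ := hpos 0; have hpos₁ := hpos 1; have hpos₂ := hpos 2
  simp only [Fin.isValue, Matrix.cons_val] at hpos₀ hpos₁ hpos₂
  have hwsum : (c₀ + t * e₀) + (c₁ + t * e₁) + (c₂ + t * e₂) = 1 := by
    linear_combination hsum + t * hesum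
  refine ⟨(c₀ + t * e₀) • u + (c₁ + t * e₁) • a + (c₂ + t * e₂) • b, ?_, ?_, ?_⟩
  · simp only [Prod.fst_add, Prod.smul_fst, smul_eq_mul]
    linear_combination t * hex
  · simp only [Prod.snd_add, Prod.smul_snd, smul_eq_mul]
    nlinarith
  · fin_cases k <;> simp at hk <;> rw [hk, zero_smul]
    · exact Or.inl ⟨_, _, hpos₁, hpos₂, by linarith, by rw [zero_add]⟩
    · exact Or.inr (Or.inl ⟨_, _, hpos₀, hpos₂, by linarith, by rw [add_zero]⟩)
    · exact Or.inr (Or.inr ⟨_, _, hpos₀, hpos₁, by linarith, by rw [add_zero]⟩)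

def IsLeftNeighbor (S : Set (ℝ × ℝ)) (g ul : ℝ × ℝ) : Prop :=
  ul ∈ S ∧ ul.1 < g.1 ∧ ∀ u ∈ S, u.1 < g.1 → u.1 ≤ ul.1

def IsRightNeighbor (S : Set (ℝ × ℝ)) (g ur : ℝ × ℝ) : Prop :=
  ur ∈ S ∧ g.1 < ur.1 ∧ ∀ u ∈ S, g.1 < u.1 → ur.1 ≤ u.1

namespace Terrain

variable (T : Terrain)

lemma edge_subset_carrier {i : ℕ} (hi : i + 1 < T.n) : T.edge i ⊆ T.carrier :=
  subset_biUnion_of_mem (u := T.edge) (Finset.mem_coe.2 (Finset.mem_range.2 (by omega)))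

lemma mem_carrier_iff {z : ℝ × ℝ} : z ∈ T.carrier ↔ ∃ i, i + 1 < T.n ∧ z ∈ T.edge i := by
  simp only [carrier, mem_iUnion, Finset.mem_range, exists_prop]
  exact exists_congr fun i => and_congr_left' (by omega)

lemma v_mem_carrier {i : ℕ} (hi : i < T.n) : T.v i ∈ T.carrier := by
  rcases Nat.lt_or_ge (i + 1) T.n with h | h
  · exact T.edge_subset_carrier h (left_mem_segment ℝ _ _)
  · obtain rfl : i = T.n - 2 + 1 := by have := T.hn; omega
    exact T.edge_subset_carrier (by have := T.hn; omega) (right_mem_segment ℝ _ _)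

lemma isCompact_carrier : IsCompact T.carrier :=
  (Finset.range _).isCompact_biUnion fun _ _ => isCompact_segment _ _

lemma isPreconnected_carrier : IsPreconnected T.carrier := by
  have : T.carrier = ⋃ i ∈ Iio (T.n - 1), T.edge i := by
    simp [carrier]
  rw [this]
  refine IsPreconnected.biUnion_of_chain ordConnected_Iio
    (fun i _ => (convex_segment _ _).isPreconnected) fun i _ _ => ?_
  exact ⟨T.v (i + 1), right_mem_segment ℝ _ _, left_mem_segment ℝ _ _⟩

lemma fst_mem_Icc_of_mem_edge {i : ℕ} (hi : i + 1 < T.n) {z : ℝ × ℝ} (hz : z ∈ T.edge i) :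
    z.1 ∈ Icc (T.v i).1 (T.v (i + 1)).1 :=
  segment_subset_Icc (T.mono i (i + 1) i.lt_succ_self hi).le (Prod.segment_subset _ _ hz).1

lemma injOn_fst_carrier : InjOn Prod.fst T.carrier := by
  intro t ht t' ht' h
  obtain ⟨i, hi, hti⟩ := T.mem_carrier_iff.1 ht
  obtain ⟨j, hj, htj⟩ := T.mem_carrier_iff.1 ht'
  wlog hij : i ≤ j generalizing t t' i j
  · exact (this ht' ht h.symm j hj htj i hi hti (by omega)).symm
  have hinj : ∀ k, k + 1 < T.n → InjOn Prod.fst (T.edge k) := fun k hk =>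
    injOn_fst_segment (T.mono k (k + 1) k.lt_succ_self hk).ne
  rcases hij.eq_or_lt with rfl | hlt
  · exact hinj i hi hti htj h
  -- the edges meet only at a common vertex, where both points must sit
  have hti' := T.fst_mem_Icc_of_mem_edge hi hti
  have htj' := T.fst_mem_Icc_of_mem_edge hj htj
  obtain rfl : j = i + 1 := by
    by_contra hne
    have := T.mono (i + 1) j (by omega) (by omega)
    linarith [hti'.2, htj'.1]
  have hv : (T.v (i + 1)).1 = t.1 := by linarith [hti'.2, htj'.1]
  rw [hinj i hi hti (right_mem_segment ℝ _ _) hv.symm,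
    hinj (i + 1) hj htj (left_mem_segment ℝ _ _) (h ▸ hv).symm]

lemma exists_mem_carrier_fst_eq {p q z : ℝ × ℝ} (hp : p ∈ T.carrier) (hq : q ∈ T.carrier)
    (hz : z ∈ segment ℝ p q) : ∃ t ∈ T.carrier, t.1 = z.1 :=
  (T.isPreconnected_carrier.image _ continuous_fst.continuousOn).ordConnected.uIcc_subset
    (mem_image_of_mem _ hp) (mem_image_of_mem _ hq)
    (segment_subset_uIcc _ _ (Prod.segment_subset _ _ hz).1)

def above : Set (ℝ × ℝ) := T.carrier + ({0} : Set ℝ) ×ˢ Ici (0 : ℝ)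

lemma isClosed_above : IsClosed T.above :=
  (isClosed_singleton.prod isClosed_Ici).add_left_of_isCompact T.isCompact_carrier

lemma mem_above_iff {z : ℝ × ℝ} : z ∈ T.above ↔ ∃ t ∈ T.carrier, t.1 = z.1 ∧ t.2 ≤ z.2 := by
  constructor
  · rintro ⟨t, ht, d, ⟨hd₁, hd₂⟩, rfl⟩
    exact ⟨t, ht, by simp_all, by simp_all⟩
  · rintro ⟨t, ht, h₁, h₂⟩
    exact ⟨t, ht, z - t, ⟨by simp [h₁], by simpa using h₂⟩, by simp⟩

lemma sees_iff_segment_subset_above {p q : ℝ × ℝ} (hp : p ∈ T.carrier) (hq : q ∈ T.carrier) :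
    T.sees p q ↔ segment ℝ p q ⊆ T.above := by
  refine ⟨fun h z hz => ?_, fun h z hz t ht htz => ?_⟩
  · obtain ⟨t, ht, htz⟩ := T.exists_mem_carrier_fst_eq hp hq hz
    exact T.mem_above_iff.2 ⟨t, ht, htz, h z hz t ht htz⟩
  · obtain ⟨t', ht', ht'z, hle⟩ := T.mem_above_iff.1 (h hz)
    rwa [T.injOn_fst_carrier ht ht' (htz.trans ht'z.symm)]

lemma isClosed_vis {p : ℝ × ℝ} (hp : p ∈ T.carrier) : IsClosed (T.vis p) := by
  have : T.vis p = T.carrier ∩ {q | segment ℝ p q ⊆ T.above} := by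
    ext q
    exact and_congr_right fun hq => T.sees_iff_segment_subset_above hp hq
  rw [this]
  exact T.isCompact_carrier.isClosed.inter (isClosed_setOf_segment_subset T.isClosed_above p)

lemma sees_comm {p q : ℝ × ℝ} : T.sees p q ↔ T.sees q p := by
  rw [sees, sees, segment_symm]

lemma mem_vis_comm {p q : ℝ × ℝ} (hp : p ∈ T.carrier) (hq : q ∈ T.carrier) :
    q ∈ T.vis p ↔ p ∈ T.vis q := by
  simp only [vis, mem_ofPred_eq, hp, hq, true_and, T.sees_comm]

lemma edge_subset_vis {i : ℕ} (hi : i + 1 < T.n) {u : ℝ × ℝ}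
    (hl : T.sees u (T.v i)) (hr : T.sees u (T.v (i + 1))) : T.edge i ⊆ T.vis u := by
  intro q hq
  refine ⟨T.edge_subset_carrier hi hq, fun z hz t ht htz => ?_⟩
  rw [edge, segment_eq_image] at hq
  obtain ⟨r, ⟨hr₀, hr₁⟩, rfl⟩ := hq
  rw [segment_eq_image] at hz
  obtain ⟨s, ⟨hs₀, hs₁⟩, rfl⟩ := hz
  obtain ⟨w, hwx, hwy, hw⟩ := exists_mem_side_fst_eq_snd_le
    (T.mono i (i + 1) i.lt_succ_self hi).ne (c₀ := 1 - s) (c₁ := s * (1 - r)) (c₂ := s * r)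
    (by linarith) (by nlinarith) (by nlinarith) (by ring)
  have hcomb : (1 - s) • u + s • ((1 - r) • T.v i + r • T.v (i + 1)) =
      (1 - s) • u + (s * (1 - r)) • T.v i + (s * r) • T.v (i + 1) := by
    rw [smul_add, smul_smul, smul_smul, add_assoc]
  rw [← hcomb] at hwx hwy
  rcases hw with hw | hw | hw
  · rwa [T.injOn_fst_carrier ht (T.edge_subset_carrier hi hw) (htz.trans hwx.symm)]
  · exact (hr w hw t ht (htz.trans hwx.symm)).trans hwy
  · exact (hl w hw t ht (htz.trans hwx.symm)).trans hwy

lemma mem_of_isPreconnected_of_fst_mem_Icc {S : Set (ℝ × ℝ)} (hSc : S ⊆ T.carrier)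
    (hS : IsPreconnected S) {p q t : ℝ × ℝ} (hp : p ∈ S) (hq : q ∈ S) (ht : t ∈ T.carrier)
    (ht₁ : t.1 ∈ Icc p.1 q.1) :
    t ∈ S := by
  obtain ⟨s, hs, hst⟩ := (hS.image _ continuous_fst.continuousOn).ordConnected.out
    (mem_image_of_mem _ hp) (mem_image_of_mem _ hq) ht₁
  rwa [← T.injOn_fst_carrier (hSc hs) ht hst]

lemma isCompact_connectedComponentIn_vis {p : ℝ × ℝ} (hp : p ∈ T.carrier) (q : ℝ × ℝ) :
    IsCompact (connectedComponentIn (T.vis p) q) :=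
  (T.isCompact_carrier.of_isClosed_subset (T.isClosed_vis hp) fun _ h => h.1
    ).connectedComponentIn q

lemma connectedComponentIn_vis_subset_carrier (p g : ℝ × ℝ) :
    connectedComponentIn (T.vis p) g ⊆ T.carrier :=
  (connectedComponentIn_subset _ _).trans fun _ h => h.1

lemma isClosed_setOf_extremal {p : ℝ × ℝ} (hp : p ∈ T.carrier) :
    IsClosed {q | T.Extremal p q} := by
  refine isClosed_of_closure_subset fun q hq => ?_
  have hqv : q ∈ T.vis p :=
    (T.isClosed_vis hp).closure_subset_iff.2 (fun _ h => h.1) hq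
  refine ⟨hqv, ?_⟩
  by_contra! ⟨⟨a, haC, hqa⟩, ⟨b, hbC, hbq⟩⟩
  -- extremal points close to `q` lie in the component of `q`, between `b` and `a`
  obtain ⟨q', hq', hqq'⟩ := Metric.mem_closure_iff.1 hq _ (lt_min (sub_pos.2 hbq) (sub_pos.2 hqa))
  have hx : |q.1 - q'.1| < min (q.1 - b.1) (a.1 - q.1) := by
    rw [← Real.dist_eq]
    exact (le_max_left _ _).trans_lt hqq'
  have hbq' : b.1 < q'.1 := by linarith [abs_lt.1 hx, min_le_left (q.1 - b.1) (a.1 - q.1)]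
  have hq'a : q'.1 < a.1 := by linarith [abs_lt.1 hx, min_le_right (q.1 - b.1) (a.1 - q.1)]
  have hq'C := T.mem_of_isPreconnected_of_fst_mem_Icc
    (T.connectedComponentIn_vis_subset_carrier p q)
    isPreconnected_connectedComponentIn hbC haC hq'.1.1 ⟨hbq'.le, hq'a.le⟩
  rcases connectedComponentIn_eq hq'C ▸ hq'.2 with h | h
  · linarith [h a haC]
  · linarith [h b hbC]

lemma exists_extremal_fst_lt {p g : ℝ × ℝ} (hp : p ∈ T.carrier) (hg : g ∈ T.vis p)
    (hgE : ¬ T.Extremal p g) :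
    ∃ m ∈ connectedComponentIn (T.vis p) g, T.Extremal p m ∧ m.1 < g.1 := by
  obtain ⟨m, hmC, hmin⟩ := (T.isCompact_connectedComponentIn_vis hp g).exists_isMinOn
    ⟨g, mem_connectedComponentIn hg⟩ continuous_fst.continuousOn
  obtain ⟨-, r, hrC, hrg⟩ : (∃ r ∈ connectedComponentIn (T.vis p) g, g.1 < r.1) ∧
      ∃ r ∈ connectedComponentIn (T.vis p) g, r.1 < g.1 := by
    simpa [Extremal, hg] using hgE
  refine ⟨m, hmC, ⟨connectedComponentIn_subset _ _ hmC, Or.inr ?_⟩, (hmin hrC).trans_lt hrg⟩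
  rw [← connectedComponentIn_eq hmC]
  exact fun r hr => hmin hr

lemma exists_extremal_fst_gt {p g : ℝ × ℝ} (hp : p ∈ T.carrier) (hg : g ∈ T.vis p)
    (hgE : ¬ T.Extremal p g) :
    ∃ m ∈ connectedComponentIn (T.vis p) g, T.Extremal p m ∧ g.1 < m.1 := by
  obtain ⟨m, hmC, hmax⟩ := (T.isCompact_connectedComponentIn_vis hp g).exists_isMaxOn
    ⟨g, mem_connectedComponentIn hg⟩ continuous_fst.continuousOn
  obtain ⟨⟨r, hrC, hgr⟩, -⟩ : (∃ r ∈ connectedComponentIn (T.vis p) g, g.1 < r.1) ∧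
      ∃ r ∈ connectedComponentIn (T.vis p) g, r.1 < g.1 := by
    simpa [Extremal, hg] using hgE
  refine ⟨m, hmC, ⟨connectedComponentIn_subset _ _ hmC, Or.inl ?_⟩, hgr.trans_le (hmax hrC)⟩
  rw [← connectedComponentIn_eq hmC]
  exact fun r hr => hmax hr

lemma extremal_mem_Uset {j : ℕ} (hj : j < T.n) {q : ℝ × ℝ} (h : T.Extremal (T.v j) q) :
    q ∈ T.Uset :=
  Or.inr (mem_biUnion (Finset.mem_range.2 hj) h)

lemma Uset_subset_carrier : T.Uset ⊆ T.carrier := by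
  rintro u (⟨i, hi, rfl⟩ | hu)
  · exact T.v_mem_carrier hi
  · obtain ⟨i, -, hq⟩ := mem_iUnion₂.1 hu
    exact hq.1.1

lemma isClosed_Uset : IsClosed T.Uset := by
  refine IsClosed.union ?_ ((Finset.range _).finite_toSet.isClosed_biUnion fun i hi =>
    T.isClosed_setOf_extremal (T.v_mem_carrier (Finset.mem_range.1 hi)))
  refine (((finite_Iio T.n).image T.v).subset ?_).isClosed
  rintro _ ⟨i, hi, rfl⟩
  exact mem_image_of_mem _ hi

lemma exists_isLeftNeighbor {S : Set (ℝ × ℝ)} (hS : IsClosed S) (hSc : S ⊆ T.carrier)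
    {g : ℝ × ℝ} (hg : g ∈ T.carrier) (hgS : g ∉ S) (hne : ∃ u ∈ S, u.1 < g.1) :
    ∃ ul, IsLeftNeighbor S g ul := by
  obtain ⟨u, hu, hug⟩ := hne
  obtain ⟨ul, ⟨hulS, hulg⟩, hmax⟩ := (T.isCompact_carrier.of_isClosed_subset
    (hS.inter (isClosed_le continuous_fst continuous_const)) (inter_subset_left.trans hSc)
    ).exists_isMaxOn ⟨u, hu, hug.le⟩ continuous_fst.continuousOn
  refine ⟨ul, hulS, hulg.lt_of_ne fun h => hgS ?_, fun u hu hug => hmax ⟨hu, hug.le⟩⟩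
  rwa [← T.injOn_fst_carrier (hSc hulS) hg h]

lemma exists_isRightNeighbor {S : Set (ℝ × ℝ)} (hS : IsClosed S) (hSc : S ⊆ T.carrier)
    {g : ℝ × ℝ} (hg : g ∈ T.carrier) (hgS : g ∉ S) (hne : ∃ u ∈ S, g.1 < u.1) :
    ∃ ur, IsRightNeighbor S g ur := by
  obtain ⟨u, hu, hgu⟩ := hne
  obtain ⟨ur, ⟨hurS, hgur⟩, hmin⟩ := (T.isCompact_carrier.of_isClosed_subset
    (hS.inter (isClosed_le continuous_const continuous_fst)) (inter_subset_left.trans hSc)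
    ).exists_isMinOn ⟨u, hu, hgu.le⟩ continuous_fst.continuousOn
  refine ⟨ur, hurS, hgur.lt_of_ne fun h => hgS ?_, fun u hu hgu => hmin ⟨hu, hgu.le⟩⟩
  rwa [T.injOn_fst_carrier hg (hSc hurS) h]

lemma sees_vertex_of_isLeftNeighbor {j : ℕ} (hj : j < T.n) {g ul : ℝ × ℝ}
    (hg : g ∈ T.vis (T.v j)) (hgU : g ∉ T.Uset) (hul : IsLeftNeighbor T.Uset g ul) :
    T.sees ul (T.v j) := by
  obtain ⟨m, hmC, hm, hmg⟩ := T.exists_extremal_fst_lt (T.v_mem_carrier hj) hg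
    fun h => hgU (T.extremal_mem_Uset hj h)
  have := T.mem_of_isPreconnected_of_fst_mem_Icc (T.connectedComponentIn_vis_subset_carrier _ g)
    isPreconnected_connectedComponentIn hmC (mem_connectedComponentIn hg)
    (T.Uset_subset_carrier hul.1) ⟨hul.2.2 m (T.extremal_mem_Uset hj hm) hmg, hul.2.1.le⟩
  exact T.sees_comm.1 (connectedComponentIn_subset _ _ this).2

lemma sees_vertex_of_isRightNeighbor {j : ℕ} (hj : j < T.n) {g ur : ℝ × ℝ}
    (hg : g ∈ T.vis (T.v j)) (hgU : g ∉ T.Uset) (hur : IsRightNeighbor T.Uset g ur) :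
    T.sees ur (T.v j) := by
  obtain ⟨m, hmC, hm, hgm⟩ := T.exists_extremal_fst_gt (T.v_mem_carrier hj) hg
    fun h => hgU (T.extremal_mem_Uset hj h)
  have := T.mem_of_isPreconnected_of_fst_mem_Icc (T.connectedComponentIn_vis_subset_carrier _ g)
    isPreconnected_connectedComponentIn (mem_connectedComponentIn hg) hmC
    (T.Uset_subset_carrier hur.1) ⟨hur.2.1.le, hur.2.2 m (T.extremal_mem_Uset hj hm) hgm⟩
  exact T.sees_comm.1 (connectedComponentIn_subset _ _ this).2

end Terrain

/-- If `g ∈ T ∖ U` covers an entire edge `e_i`, then its `U`-neighbors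
`u_ℓ = max{u ∈ U : x(u) < x(g)}` and `u_r = min{u ∈ U : x(u) > x(g)}` exist and each
entirely covers `e_i`. -/
theorem U_neighbors_cover_edge (T : Terrain) (g : ℝ × ℝ)
    (hg : g ∈ T.carrier \ T.Uset) (i : ℕ) (hi : i + 1 < T.n)
    (hcov : T.edge i ⊆ T.vis g) :
    (∃ ul ∈ T.Uset, ul.1 < g.1 ∧ (∀ u ∈ T.Uset, u.1 < g.1 → u.1 ≤ ul.1) ∧
      T.edge i ⊆ T.vis ul) ∧
    (∃ ur ∈ T.Uset, g.1 < ur.1 ∧ (∀ u ∈ T.Uset, g.1 < u.1 → ur.1 ≤ u.1) ∧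
      T.edge i ⊆ T.vis ur) := by
  obtain ⟨hgc, hgU⟩ := hg
  have hv : T.v i ∈ T.carrier := T.v_mem_carrier (by omega)
  have hgl : g ∈ T.vis (T.v i) := (T.mem_vis_comm hv hgc).2 (hcov (left_mem_segment ℝ _ _))
  have hgr : g ∈ T.vis (T.v (i + 1)) :=
    (T.mem_vis_comm (T.v_mem_carrier hi) hgc).2 (hcov (right_mem_segment ℝ _ _))
  have hgE : ¬ T.Extremal (T.v i) g := fun h => hgU (T.extremal_mem_Uset (by omega) h)
  obtain ⟨m, -, hm, hmg⟩ := T.exists_extremal_fst_lt hv hgl hgE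
  obtain ⟨M, -, hM, hgM⟩ := T.exists_extremal_fst_gt hv hgl hgE
  obtain ⟨ul, hul⟩ := T.exists_isLeftNeighbor T.isClosed_Uset T.Uset_subset_carrier hgc hgU
    ⟨m, T.extremal_mem_Uset (by omega) hm, hmg⟩
  obtain ⟨ur, hur⟩ := T.exists_isRightNeighbor T.isClosed_Uset T.Uset_subset_carrier hgc hgU
    ⟨M, T.extremal_mem_Uset (by omega) hM, hgM⟩
  exact ⟨⟨ul, hul.1, hul.2.1, hul.2.2, T.edge_subset_vis hi
      (T.sees_vertex_of_isLeftNeighbor (by omega) hgl hgU hul)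
      (T.sees_vertex_of_isLeftNeighbor hi hgr hgU hul)⟩,
    ⟨ur, hur.1, hur.2.1, hur.2.2, T.edge_subset_vis hi
      (T.sees_vertex_of_isRightNeighbor (by omega) hgl hgU hur)
      (T.sees_vertex_of_isRightNeighbor hi hgr hgU hur)⟩⟩
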